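/- arXiv:1408.0321 — 4 statements merged into one kernel-verified Lean document; each statement's English description precedes it below -/
import Mathlib

section
/- Let 𝒞 be a quantaloid in which, for every object X, the identity 1_X is the top element of the complete lattice 𝒞(X,X), and let D = (d_X : X→X) be a dualizing family of arrows. Then d_X is the bottom element of 𝒞(X,X) for every object X. -/
universe u v w

/-- The data of a quantaloid, part 1: a category whose hom-sets are complete lattices. -/
structure QuantaloidCore where
  Obj : Type u
  Hom : Obj → Obj → Type v
  lat : ∀ X Y : Obj, CompleteLattice (Hom X Y)
  comp : ∀ {X Y Z : Obj}, Hom Y Z → Hom X Y → Hom X Z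
  id : ∀ X : Obj, Hom X X
  comp_assoc : ∀ {W X Y Z : Obj} (h : Hom Y Z) (g : Hom X Y) (f : Hom W X),
    comp (comp h g) f = comp h (comp g f)
  id_comp : ∀ {X Y : Obj} (f : Hom X Y), comp (id Y) f = f
  comp_id : ∀ {X Y : Obj} (f : Hom X Y), comp f (id X) = f

attribute [instance] QuantaloidCore.lat

/-- A quantaloid: a category enriched in sup-lattices, i.e. each hom-set is a complete
lattice and composition preserves arbitrary suprema in each variable. -/
structure Quantaloid extends QuantaloidCore where
  comp_sSup : ∀ {X Y Z : Obj} (g : Hom Y Z) (S : Set (Hom X Y)),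
    comp g (sSup S) = sSup ((fun f => comp g f) '' S)
  sSup_comp : ∀ {X Y Z : Obj} (S : Set (Hom Y Z)) (f : Hom X Y),
    comp (sSup S) f = sSup ((fun g => comp g f) '' S)

namespace Quantaloid

variable (𝒞 : Quantaloid)

/-- The left implication `h ↙ f`. -/
def ldiv {X Y Z : 𝒞.Obj} (h : 𝒞.Hom X Z) (f : 𝒞.Hom X Y) : 𝒞.Hom Y Z :=
  sSup {g' : 𝒞.Hom Y Z | 𝒞.comp g' f ≤ h}

/-- The right implication `g ↘ h`. -/
def rdiv {X Y Z : 𝒞.Obj} (g : 𝒞.Hom Y Z) (h : 𝒞.Hom X Z) : 𝒞.Hom X Y :=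
  sSup {f' : 𝒞.Hom X Y | 𝒞.comp g f' ≤ h}

/-- An adjunction `f ⊣ g : X ⇀ Y` in a quantaloid. -/
def IsAdj {X Y : 𝒞.Obj} (f : 𝒞.Hom X Y) (g : 𝒞.Hom Y X) : Prop :=
  𝒞.id X ≤ 𝒞.comp g f ∧ 𝒞.comp f g ≤ 𝒞.id Y

end Quantaloid

/-- If in a quantaloid every identity arrow is the top element of its hom-lattice and
`d` is a dualizing family, then each `d X` is the bottom element
(Proposition `dualizing_bottom`). -/
theorem quantaloid_dualizing_bottom (𝒞 : Quantaloid)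
    (htop : ∀ X : 𝒞.Obj, 𝒞.id X = ⊤)
    (d : ∀ X : 𝒞.Obj, 𝒞.Hom X X)
    (hdual : ∀ {X Y : 𝒞.Obj} (f : 𝒞.Hom X Y),
      𝒞.rdiv (𝒞.ldiv (d X) f) (d X) = f ∧ 𝒞.ldiv (d Y) (𝒞.rdiv f (d Y)) = f) :
    ∀ X : 𝒞.Obj, d X = ⊥ := by
  intro X
  have hbot : ∀ {Y Z : 𝒞.Obj} (g : 𝒞.Hom Y Z),
      𝒞.comp g (⊥ : 𝒞.Hom Y Y) = ⊥ := by
    intro Y Z g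
    have := 𝒞.comp_sSup g (∅ : Set (𝒞.Hom Y Y))
    simpa using this
  have hldiv : 𝒞.ldiv (d X) (⊥ : 𝒞.Hom X X) = ⊤ := by
    apply top_le_iff.mp
    apply le_sSup
    simp [Set.mem_setOf_eq, hbot]
  have h := (hdual (⊥ : 𝒞.Hom X X)).1
  rw [hldiv] at h
  have hcomp : ∀ f : 𝒞.Hom X X, 𝒞.comp (⊤ : 𝒞.Hom X X) f = f := by
    intro f
    rw [← htop X, 𝒞.id_comp]
  have hr : 𝒞.rdiv (⊤ : 𝒞.Hom X X) (d X) = d X := by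
    unfold Quantaloid.rdiv
    simp only [hcomp]
    exact le_antisymm (sSup_le fun f hf => hf) (le_sSup le_rfl)
  rw [hr] at h
  exact h
end

section
/- Let 𝒞 be a quantaloid with a dualizing family D = (d_X). Then for all arrows f, fᵢ : X→Y, g : Y→Z, h : X→Z: (1) ⨆ᵢ(d_X↙fᵢ) = d_X↙(⨅ᵢfᵢ) and ⨆ᵢ(fᵢ↘d_Y) = (⨅ᵢfᵢ)↘d_Y; (2) g∘f = d_Z↙(f↘(g↘d_Z)) = ((d_X↙f)↙g)↘d_X; (3) h↙f = (d_X↙h)↘(d_X↙f) = d_Z↙(f∘(h↘d_Z)); (4) g↘h = (g↘d_Z)↙(h↘d_Z) = ((d_X↙h)∘g)↘d_X; (5) (d_Y↙g)↘f = g↙(f↘d_Y). -/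
universe u v w

namespace Quantaloid

variable (𝒞 : Quantaloid)

lemma comp_mono_left {X Y Z : 𝒞.Obj} {g g' : 𝒞.Hom Y Z} (f : 𝒞.Hom X Y) (h : g ≤ g') :
    𝒞.comp g f ≤ 𝒞.comp g' f := by
  have h1 : 𝒞.comp (sSup {g, g'}) f = sSup {𝒞.comp g f, 𝒞.comp g' f} := by
    rw [𝒞.sSup_comp, Set.image_pair]
  have h2 : sSup ({g, g'} : Set _) = g' := by rw [sSup_pair, sup_eq_right.mpr h]
  rw [h2] at h1
  rw [h1]; exact le_sSup (by simp)

lemma comp_mono_right {X Y Z : 𝒞.Obj} (g : 𝒞.Hom Y Z) {f f' : 𝒞.Hom X Y} (h : f ≤ f') :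
    𝒞.comp g f ≤ 𝒞.comp g f' := by
  have h1 : 𝒞.comp g (sSup {f, f'}) = sSup {𝒞.comp g f, 𝒞.comp g f'} := by
    rw [𝒞.comp_sSup, Set.image_pair]
  have h2 : sSup ({f, f'} : Set _) = f' := by rw [sSup_pair, sup_eq_right.mpr h]
  rw [h2] at h1
  rw [h1]; exact le_sSup (by simp)

lemma le_ldiv_iff {X Y Z : 𝒞.Obj} (g : 𝒞.Hom Y Z) (h : 𝒞.Hom X Z) (f : 𝒞.Hom X Y) :
    g ≤ 𝒞.ldiv h f ↔ 𝒞.comp g f ≤ h := by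
  constructor
  · intro hg
    refine le_trans (𝒞.comp_mono_left f hg) ?_
    rw [ldiv, 𝒞.sSup_comp]
    exact sSup_le (by rintro _ ⟨g', hg', rfl⟩; exact hg')
  · intro hg; exact le_sSup hg

lemma le_rdiv_iff {X Y Z : 𝒞.Obj} (f : 𝒞.Hom X Y) (g : 𝒞.Hom Y Z) (h : 𝒞.Hom X Z) :
    f ≤ 𝒞.rdiv g h ↔ 𝒞.comp g f ≤ h := by
  constructor
  · intro hf
    refine le_trans (𝒞.comp_mono_right g hf) ?_
    rw [rdiv, 𝒞.comp_sSup]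
    exact sSup_le (by rintro _ ⟨f', hf', rfl⟩; exact hf')
  · intro hf; exact le_sSup hf

end Quantaloid

/-- Calculation rules in a quantaloid with a dualizing family
(Proposition `Girard_quantaloid_properties`). -/
theorem quantaloid_dualizing_properties (𝒞 : Quantaloid)
    (d : ∀ X : 𝒞.Obj, 𝒞.Hom X X)
    (hdual : ∀ {X Y : 𝒞.Obj} (f : 𝒞.Hom X Y),
      𝒞.rdiv (𝒞.ldiv (d X) f) (d X) = f ∧ 𝒞.ldiv (d Y) (𝒞.rdiv f (d Y)) = f) :
    -- (1)
    (∀ (X Y : 𝒞.Obj) (ι : Type w) (f : ι → 𝒞.Hom X Y),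
        (⨆ i, 𝒞.ldiv (d X) (f i)) = 𝒞.ldiv (d X) (⨅ i, f i)) ∧
    (∀ (X Y : 𝒞.Obj) (ι : Type w) (f : ι → 𝒞.Hom X Y),
        (⨆ i, 𝒞.rdiv (f i) (d Y)) = 𝒞.rdiv (⨅ i, f i) (d Y)) ∧
    -- (2)
    (∀ (X Y Z : 𝒞.Obj) (f : 𝒞.Hom X Y) (g : 𝒞.Hom Y Z),
        𝒞.comp g f = 𝒞.ldiv (d Z) (𝒞.rdiv f (𝒞.rdiv g (d Z))) ∧
        𝒞.comp g f = 𝒞.rdiv (𝒞.ldiv (𝒞.ldiv (d X) f) g) (d X)) ∧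
    -- (3)
    (∀ (X Y Z : 𝒞.Obj) (f : 𝒞.Hom X Y) (h : 𝒞.Hom X Z),
        𝒞.ldiv h f = 𝒞.rdiv (𝒞.ldiv (d X) h) (𝒞.ldiv (d X) f) ∧
        𝒞.ldiv h f = 𝒞.ldiv (d Z) (𝒞.comp f (𝒞.rdiv h (d Z)))) ∧
    -- (4)
    (∀ (X Y Z : 𝒞.Obj) (g : 𝒞.Hom Y Z) (h : 𝒞.Hom X Z),
        𝒞.rdiv g h = 𝒞.ldiv (𝒞.rdiv g (d Z)) (𝒞.rdiv h (d Z)) ∧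
        𝒞.rdiv g h = 𝒞.rdiv (𝒞.comp (𝒞.ldiv (d X) h) g) (d X)) ∧
    -- (5)
    (∀ (X Y Z : 𝒞.Obj) (f : 𝒞.Hom X Y) (g : 𝒞.Hom Y Z),
        𝒞.rdiv (𝒞.ldiv (d Y) g) f = 𝒞.ldiv g (𝒞.rdiv f (d Y))) := by
  -- Abbreviations for the two "negations"
  -- Key iff characterizations
  have hL := fun {X Y Z : 𝒞.Obj} (g : 𝒞.Hom Y Z) (h : 𝒞.Hom X Z) (f : 𝒞.Hom X Y) =>
    𝒞.le_ldiv_iff g h f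
  have hR := fun {X Y Z : 𝒞.Obj} (f : 𝒞.Hom X Y) (g : 𝒞.Hom Y Z) (h : 𝒞.Hom X Z) =>
    𝒞.le_rdiv_iff f g h
  -- rdiv f (rdiv g d) = rdiv (g ∘ f) d
  have key1 : ∀ {X Y Z : 𝒞.Obj} (f : 𝒞.Hom X Y) (g : 𝒞.Hom Y Z),
      𝒞.rdiv f (𝒞.rdiv g (d Z)) = 𝒞.rdiv (𝒞.comp g f) (d Z) := by
    intro X Y Z f g
    refine eq_of_forall_le_iff fun x => ?_
    rw [hR, hR, hR, 𝒞.comp_assoc]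
  -- ldiv (ldiv d f) g = ldiv d (g ∘ f)
  have key2 : ∀ {X Y Z : 𝒞.Obj} (f : 𝒞.Hom X Y) (g : 𝒞.Hom Y Z),
      𝒞.ldiv (𝒞.ldiv (d X) f) g = 𝒞.ldiv (d X) (𝒞.comp g f) := by
    intro X Y Z f g
    refine eq_of_forall_le_iff fun x => ?_
    rw [hL, hL, hL, 𝒞.comp_assoc]
  -- antitonicity iffs
  have hLle : ∀ {X Y : 𝒞.Obj} (h k : 𝒞.Hom X Y),
      (𝒞.ldiv (d X) h ≤ 𝒞.ldiv (d X) k ↔ k ≤ h) := by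
    intro X Y h k
    rw [hL, ← hR, (hdual h).1]
  have hRle : ∀ {X Y : 𝒞.Obj} (h k : 𝒞.Hom X Y),
      (𝒞.rdiv h (d Y) ≤ 𝒞.rdiv k (d Y) ↔ k ≤ h) := by
    intro X Y h k
    rw [hR, ← hL, (hdual h).2]
  refine ⟨?_, ?_, ?_, ?_, ?_, ?_⟩
  · -- (1a)
    intro X Y ι f
    refine le_antisymm (iSup_le fun i => (hLle _ _).mpr (iInf_le f i)) ?_
    have h1 : 𝒞.rdiv (⨆ i, 𝒞.ldiv (d X) (f i)) (d X) ≤ ⨅ i, f i := by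
      refine le_iInf fun i => ?_
      rw [← (hdual (f i)).1]
      exact (hRle _ _).mpr (le_iSup (fun i => 𝒞.ldiv (d X) (f i)) i)
    calc 𝒞.ldiv (d X) (⨅ i, f i)
        ≤ 𝒞.ldiv (d X) (𝒞.rdiv (⨆ i, 𝒞.ldiv (d X) (f i)) (d X)) := (hLle _ _).mpr h1
      _ = ⨆ i, 𝒞.ldiv (d X) (f i) := (hdual _).2
  · -- (1b)
    intro X Y ι f
    refine le_antisymm (iSup_le fun i => (hRle _ _).mpr (iInf_le f i)) ?_
    have h1 : 𝒞.ldiv (d Y) (⨆ i, 𝒞.rdiv (f i) (d Y)) ≤ ⨅ i, f i := by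
      refine le_iInf fun i => ?_
      rw [← (hdual (f i)).2]
      exact (hLle _ _).mpr (le_iSup (fun i => 𝒞.rdiv (f i) (d Y)) i)
    calc 𝒞.rdiv (⨅ i, f i) (d Y)
        ≤ 𝒞.rdiv (𝒞.ldiv (d Y) (⨆ i, 𝒞.rdiv (f i) (d Y))) (d Y) := (hRle _ _).mpr h1
      _ = ⨆ i, 𝒞.rdiv (f i) (d Y) := (hdual _).1
  · -- (2)
    intro X Y Z f g
    constructor
    · rw [key1, (hdual (𝒞.comp g f)).2]
    · rw [key2, (hdual (𝒞.comp g f)).1]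
  · -- (3)
    intro X Y Z f h
    constructor
    · refine eq_of_forall_le_iff fun g => ?_
      calc g ≤ 𝒞.ldiv h f ↔ 𝒞.comp g f ≤ h := hL _ _ _
        _ ↔ 𝒞.comp g f ≤ 𝒞.rdiv (𝒞.ldiv (d X) h) (d X) := by rw [(hdual h).1]
        _ ↔ 𝒞.comp (𝒞.ldiv (d X) h) (𝒞.comp g f) ≤ d X := hR _ _ _
        _ ↔ 𝒞.comp (𝒞.comp (𝒞.ldiv (d X) h) g) f ≤ d X := by rw [𝒞.comp_assoc]
        _ ↔ 𝒞.comp (𝒞.ldiv (d X) h) g ≤ 𝒞.ldiv (d X) f := (hL _ _ _).symm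
        _ ↔ g ≤ 𝒞.rdiv (𝒞.ldiv (d X) h) (𝒞.ldiv (d X) f) := (hR _ _ _).symm
    · refine eq_of_forall_le_iff fun g => ?_
      calc g ≤ 𝒞.ldiv h f ↔ 𝒞.comp g f ≤ h := hL _ _ _
        _ ↔ 𝒞.comp g f ≤ 𝒞.ldiv (d Z) (𝒞.rdiv h (d Z)) := by rw [(hdual h).2]
        _ ↔ 𝒞.comp (𝒞.comp g f) (𝒞.rdiv h (d Z)) ≤ d Z := hL _ _ _
        _ ↔ 𝒞.comp g (𝒞.comp f (𝒞.rdiv h (d Z))) ≤ d Z := by rw [𝒞.comp_assoc]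
        _ ↔ g ≤ 𝒞.ldiv (d Z) (𝒞.comp f (𝒞.rdiv h (d Z))) := (hL _ _ _).symm
  · -- (4)
    intro X Y Z g h
    constructor
    · refine eq_of_forall_le_iff fun x => ?_
      calc x ≤ 𝒞.rdiv g h ↔ 𝒞.comp g x ≤ h := hR _ _ _
        _ ↔ 𝒞.comp g x ≤ 𝒞.ldiv (d Z) (𝒞.rdiv h (d Z)) := by rw [(hdual h).2]
        _ ↔ 𝒞.comp (𝒞.comp g x) (𝒞.rdiv h (d Z)) ≤ d Z := hL _ _ _
        _ ↔ 𝒞.comp g (𝒞.comp x (𝒞.rdiv h (d Z))) ≤ d Z := by rw [𝒞.comp_assoc]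
        _ ↔ 𝒞.comp x (𝒞.rdiv h (d Z)) ≤ 𝒞.rdiv g (d Z) := (hR _ _ _).symm
        _ ↔ x ≤ 𝒞.ldiv (𝒞.rdiv g (d Z)) (𝒞.rdiv h (d Z)) := (hL _ _ _).symm
    · refine eq_of_forall_le_iff fun x => ?_
      calc x ≤ 𝒞.rdiv g h ↔ 𝒞.comp g x ≤ h := hR _ _ _
        _ ↔ 𝒞.comp g x ≤ 𝒞.rdiv (𝒞.ldiv (d X) h) (d X) := by rw [(hdual h).1]
        _ ↔ 𝒞.comp (𝒞.ldiv (d X) h) (𝒞.comp g x) ≤ d X := hR _ _ _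
        _ ↔ 𝒞.comp (𝒞.comp (𝒞.ldiv (d X) h) g) x ≤ d X := by rw [𝒞.comp_assoc]
        _ ↔ x ≤ 𝒞.rdiv (𝒞.comp (𝒞.ldiv (d X) h) g) (d X) := (hR _ _ _).symm
  · -- (5)
    intro X Y Z f g
    refine eq_of_forall_le_iff fun x => ?_
    calc x ≤ 𝒞.rdiv (𝒞.ldiv (d Y) g) f ↔ 𝒞.comp (𝒞.ldiv (d Y) g) x ≤ f := hR _ _ _
      _ ↔ 𝒞.comp (𝒞.ldiv (d Y) g) x ≤ 𝒞.ldiv (d Y) (𝒞.rdiv f (d Y)) := by rw [(hdual f).2]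
      _ ↔ 𝒞.comp (𝒞.comp (𝒞.ldiv (d Y) g) x) (𝒞.rdiv f (d Y)) ≤ d Y := hL _ _ _
      _ ↔ 𝒞.comp (𝒞.ldiv (d Y) g) (𝒞.comp x (𝒞.rdiv f (d Y))) ≤ d Y := by rw [𝒞.comp_assoc]
      _ ↔ 𝒞.comp x (𝒞.rdiv f (d Y)) ≤ 𝒞.rdiv (𝒞.ldiv (d Y) g) (d Y) := (hR _ _ _).symm
      _ ↔ 𝒞.comp x (𝒞.rdiv f (d Y)) ≤ g := by rw [(hdual g).1]
      _ ↔ x ≤ 𝒞.ldiv g (𝒞.rdiv f (d Y)) := (hL _ _ _).symm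
end

section
/- Let Q be a unital quantale. The following conditions are equivalent: (1) for all a,b ∈ Q with a ≤ b there exist x,y ∈ Q with x&b = a = b&y; (2) for all a,b ∈ Q with a ≤ b, a = b&(b∖a) = (a/b)&b; (3) for all a,b,c ∈ Q with a ≤ c and b ≤ c, a&(c∖b) = (a/c)&b; (4) for all a,b ∈ Q, (b/a)&a = a⊓b = a&(a∖b). Moreover, if these equivalent conditions hold (Q is divisible), then the unit I is the top element of Q. -/
universe u

/-- A unital quantale: a complete lattice with a monoid structure whose multiplication
preserves arbitrary suprema in each variable. -/
class UnitalQuantale (Q : Type u) extends CompleteLattice Q, Monoid Q where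
  mul_sSup : ∀ (a : Q) (S : Set Q), a * sSup S = ⨆ b ∈ S, a * b
  sSup_mul : ∀ (S : Set Q) (a : Q), sSup S * a = ⨆ b ∈ S, b * a

variable {Q : Type u} [UnitalQuantale Q]

/-- The left residual `b / a = ⨆ {c | c * a ≤ b}`. -/
def qdivr (b a : Q) : Q := sSup {c : Q | c * a ≤ b}

/-- The right residual `a ∖ b = ⨆ {c | a * c ≤ b}`. -/
def qdivl (a b : Q) : Q := sSup {c : Q | a * c ≤ b}

lemma qmul_le_left {b c : Q} (a : Q) (h : b ≤ c) : a * b ≤ a * c := by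
  have hs : sSup {b, c} = c := by rw [sSup_pair, sup_eq_right.mpr h]
  calc a * b ≤ ⨆ d ∈ ({b, c} : Set Q), a * d := le_biSup _ (Set.mem_insert _ _)
    _ = a * sSup {b, c} := (UnitalQuantale.mul_sSup a _).symm
    _ = a * c := by rw [hs]

lemma qmul_le_right {a b : Q} (c : Q) (h : a ≤ b) : a * c ≤ b * c := by
  have hs : sSup {a, b} = b := by rw [sSup_pair, sup_eq_right.mpr h]
  calc a * c ≤ ⨆ d ∈ ({a, b} : Set Q), d * c := le_biSup (fun d => d * c) (Set.mem_insert _ _)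
    _ = sSup {a, b} * c := (UnitalQuantale.sSup_mul _ c).symm
    _ = b * c := by rw [hs]

lemma qdivr_mul_le (b a : Q) : qdivr b a * a ≤ b := by
  rw [qdivr, UnitalQuantale.sSup_mul]
  exact iSup₂_le fun c hc => hc

lemma mul_qdivl_le (a b : Q) : a * qdivl a b ≤ b := by
  rw [qdivl, UnitalQuantale.mul_sSup]
  exact iSup₂_le fun c hc => hc

lemma le_qdivr {a b c : Q} (h : c * a ≤ b) : c ≤ qdivr b a := le_sSup h

lemma le_qdivl {a b c : Q} (h : a * c ≤ b) : c ≤ qdivl a b := le_sSup h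

lemma qdivr_mono {b b' : Q} (a : Q) (h : b ≤ b') : qdivr b a ≤ qdivr b' a :=
  sSup_le_sSup fun _ hc => le_trans hc h

lemma qdivl_mono {b b' : Q} (a : Q) (h : b ≤ b') : qdivl a b ≤ qdivl a b' :=
  sSup_le_sSup fun _ hc => le_trans hc h

lemma one_le_qdivr (b : Q) : (1 : Q) ≤ qdivr b b := le_qdivr (by rw [one_mul])

lemma one_le_qdivl (b : Q) : (1 : Q) ≤ qdivl b b := le_qdivl (by rw [mul_one])

/-- (1) → (2) -/
lemma quantP_imp_two (hP : ∀ a b : Q, a ≤ b → ∃ x y : Q, x * b = a ∧ b * y = a) :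
    ∀ a b : Q, a ≤ b → a = b * qdivl b a ∧ a = qdivr a b * b := by
  intro a b hab
  obtain ⟨x, y, hx, hy⟩ := hP a b hab
  constructor
  · refine le_antisymm ?_ (mul_qdivl_le b a)
    calc a = b * y := hy.symm
      _ ≤ b * qdivl b a := qmul_le_left b (le_qdivl (by rw [hy]))
  · refine le_antisymm ?_ (qdivr_mul_le a b)
    calc a = x * b := hx.symm
      _ ≤ qdivr a b * b := qmul_le_right b (le_qdivr (by rw [hx]))

/-- (1) → (3) -/
lemma quantP_imp_three (hP : ∀ a b : Q, a ≤ b → ∃ x y : Q, x * b = a ∧ b * y = a) :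
    ∀ a b c : Q, a ≤ c → b ≤ c → a * qdivl c b = qdivr a c * b := by
  intro a b c hac hbc
  have ha := (quantP_imp_two hP a c hac).2
  have hb := (quantP_imp_two hP b c hbc).1
  calc a * qdivl c b = qdivr a c * c * qdivl c b := by rw [← ha]
    _ = qdivr a c * (c * qdivl c b) := mul_assoc _ _ _
    _ = qdivr a c * b := by rw [← hb]

/-- (1) → 1 = ⊤ -/
lemma quantP_imp_top (hP : ∀ a b : Q, a ≤ b → ∃ x y : Q, x * b = a ∧ b * y = a) :
    (1 : Q) = ⊤ := by
  have h3 := quantP_imp_three hP 1 ⊤ ⊤ le_top le_top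
  have htt : qdivl (⊤ : Q) ⊤ = ⊤ := le_antisymm le_top (le_qdivl le_top)
  rw [htt, one_mul] at h3
  exact le_antisymm le_top (h3 ▸ qdivr_mul_le 1 ⊤)

/-- Equivalent characterizations of divisibility of a unital quantale, and: in a divisible
unital quantale the unit is the top element (Proposition `divisible_condition`). -/
theorem quantale_divisible_condition :
    (((∀ a b : Q, a ≤ b → ∃ x y : Q, x * b = a ∧ b * y = a) ↔
        (∀ a b : Q, a ≤ b → a = b * qdivl b a ∧ a = qdivr a b * b)) ∧
      ((∀ a b : Q, a ≤ b → ∃ x y : Q, x * b = a ∧ b * y = a) ↔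
        (∀ a b c : Q, a ≤ c → b ≤ c → a * qdivl c b = qdivr a c * b)) ∧
      ((∀ a b : Q, a ≤ b → ∃ x y : Q, x * b = a ∧ b * y = a) ↔
        (∀ a b : Q, qdivr b a * a = a ⊓ b ∧ a * qdivl a b = a ⊓ b))) ∧
    ((∀ a b : Q, a ≤ b → ∃ x y : Q, x * b = a ∧ b * y = a) → (1 : Q) = ⊤) := by
  refine ⟨⟨?_, ?_, ?_⟩, quantP_imp_top⟩
  · constructor
    · exact quantP_imp_two
    · intro h2 a b hab
      exact ⟨qdivr a b, qdivl b a, (h2 a b hab).2.symm, (h2 a b hab).1.symm⟩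
  · constructor
    · exact quantP_imp_three
    · intro h3 a b hab
      refine ⟨qdivr a b, qdivl b a, ?_, ?_⟩
      · refine le_antisymm (qdivr_mul_le a b) ?_
        calc a = a * 1 := (mul_one a).symm
          _ ≤ a * qdivl b b := qmul_le_left a (one_le_qdivl b)
          _ = qdivr a b * b := h3 a b b hab le_rfl
      · refine le_antisymm (mul_qdivl_le b a) ?_
        calc a = 1 * a := (one_mul a).symm
          _ ≤ qdivr b b * a := qmul_le_right a (one_le_qdivr b)
          _ = b * qdivl b a := (h3 b a b le_rfl hab).symm
  · constructor
    · intro hP a b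
      have hT := quantP_imp_top hP
      constructor
      · refine le_antisymm (le_inf ?_ (qdivr_mul_le b a)) ?_
        · calc qdivr b a * a ≤ 1 * a := qmul_le_right a (hT ▸ le_top)
            _ = a := one_mul a
        · calc a ⊓ b = qdivr (a ⊓ b) a * a := (quantP_imp_two hP (a ⊓ b) a inf_le_left).2
            _ ≤ qdivr b a * a := qmul_le_right a (qdivr_mono a inf_le_right)
      · refine le_antisymm (le_inf ?_ (mul_qdivl_le a b)) ?_
        · calc a * qdivl a b ≤ a * 1 := qmul_le_left a (hT ▸ le_top)
            _ = a := mul_one a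
        · calc a ⊓ b = a * qdivl a (a ⊓ b) := (quantP_imp_two hP (a ⊓ b) a inf_le_left).1
            _ ≤ a * qdivl a b := qmul_le_left a (qdivl_mono a inf_le_right)
    · intro h4 a b hab
      have h := h4 b a
      rw [inf_eq_right.mpr hab] at h
      exact ⟨qdivr a b, qdivl b a, h.1, h.2⟩
end

section
/- Let Q be a unital quantale and φ : (A,𝔸) ⇸ (B,𝔹) a Q-distributor between Q-preordered sets. Define φ↑(μ)(y) := ⨅_{x∈A} φ(x,y)/μ(x) for μ : A→Q and φ↓(λ)(x) := ⨅_{y∈B} λ(y)∖φ(x,y) for λ : B→Q. Then: (1) φ↑ sends contravariant presheaves on 𝔸 to covariant presheaves on 𝔹, and φ↓ sends covariant presheaves on 𝔹 to contravariant presheaves on 𝔸; (2) (Isbell adjunction) for every contravariant presheaf μ on 𝔸 and every covariant presheaf λ on 𝔹, P†B(φ↑μ, λ) = PA(μ, φ↓λ), i.e., ⨅_{y∈B} λ(y)∖φ↑(μ)(y) = ⨅_{x∈A} φ↓(λ)(x)/μ(x). -/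
/-!
Residuation turns every inequality `c ≤ φ↑μ y` or `c ≤ φ↓λ x` into a family of inequalities
`c & μ x ≤ φ x y`, resp. `λ y & c ≤ φ x y`. Hence an element `c` lies below either side of the
adjunction equation iff `λ y & c & μ x ≤ φ x y` for all `x` and `y`, so the two sides agree.
-/

universe u

variable {Q : Type u} [UnitalQuantale Q]

instance UnitalQuantale.toIsQuantale : IsQuantale Q :=
  ⟨UnitalQuantale.mul_sSup, UnitalQuantale.sSup_mul⟩

-- `qdivr b a` and `qdivl a b` are Mathlib's `a ⇨ₗ b` and `a ⇨ᵣ b`.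
theorem le_qdivr_iff {a b c : Q} : c ≤ qdivr b a ↔ c * a ≤ b :=
  Quantale.leftMulResiduation_le_iff_mul_le

theorem le_qdivl_iff {a b c : Q} : c ≤ qdivl a b ↔ a * c ≤ b :=
  Quantale.rightMulResiduation_le_iff_mul_le

section Isbell

variable {A B : Type*}

/-- `φ↑ μ`. -/
def isbellUp (φ : A → B → Q) (μ : A → Q) (y : B) : Q := ⨅ x, qdivr (φ x y) (μ x)

/-- `φ↓ λ`. -/
def isbellDown (φ : A → B → Q) (lam : B → Q) (x : A) : Q := ⨅ y, qdivl (lam y) (φ x y)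

theorem le_isbellUp_iff {φ : A → B → Q} {μ : A → Q} {y : B} {c : Q} :
    c ≤ isbellUp φ μ y ↔ ∀ x, c * μ x ≤ φ x y := by
  simp only [isbellUp, le_iInf_iff, le_qdivr_iff]

theorem le_isbellDown_iff {φ : A → B → Q} {lam : B → Q} {x : A} {c : Q} :
    c ≤ isbellDown φ lam x ↔ ∀ y, lam y * c ≤ φ x y := by
  simp only [isbellDown, le_iInf_iff, le_qdivl_iff]

theorem isbellUp_covariant {𝔹 : B → B → Q} {φ : A → B → Q}
    (hφ : ∀ x y y', 𝔹 y y' * φ x y ≤ φ x y') (μ : A → Q) (y y' : B) :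
    𝔹 y y' * isbellUp φ μ y ≤ isbellUp φ μ y' :=
  le_isbellUp_iff.mpr fun x =>
    calc 𝔹 y y' * isbellUp φ μ y * μ x = 𝔹 y y' * (isbellUp φ μ y * μ x) := mul_assoc _ _ _
      _ ≤ 𝔹 y y' * φ x y := mul_le_mul_right (le_isbellUp_iff.mp le_rfl x) _
      _ ≤ φ x y' := hφ x y y'

theorem isbellDown_contravariant {𝔸 : A → A → Q} {φ : A → B → Q}
    (hφ : ∀ x x' y, φ x' y * 𝔸 x x' ≤ φ x y) (lam : B → Q) (x x' : A) :
    isbellDown φ lam x' * 𝔸 x x' ≤ isbellDown φ lam x :=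
  le_isbellDown_iff.mpr fun y =>
    calc lam y * (isbellDown φ lam x' * 𝔸 x x') = lam y * isbellDown φ lam x' * 𝔸 x x' :=
          (mul_assoc _ _ _).symm
      _ ≤ φ x' y * 𝔸 x x' := mul_le_mul_left (le_isbellDown_iff.mp le_rfl y) _
      _ ≤ φ x y := hφ x x' y

theorem iInf_qdivl_isbellUp_eq_iInf_isbellDown_qdivr (φ : A → B → Q) (μ : A → Q) (lam : B → Q) :
    ⨅ y, qdivl (lam y) (isbellUp φ μ y) = ⨅ x, qdivr (isbellDown φ lam x) (μ x) :=
  eq_of_forall_le_iff fun c => by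
    simp only [le_iInf_iff, le_qdivl_iff, le_qdivr_iff, le_isbellUp_iff, le_isbellDown_iff,
      mul_assoc]
    exact forall_comm

end Isbell

theorem qdistributor_isbell_adjunction_general {A B : Type*}
    (𝔸 : A → A → Q) (𝔹 : B → B → Q)
    (φ : A → B → Q)
    (hφ1 : ∀ x y y', 𝔹 y y' * φ x y ≤ φ x y')
    (hφ2 : ∀ x x' y, φ x' y * 𝔸 x x' ≤ φ x y) :
    -- (1) φ↑ sends contravariant presheaves on 𝔸 to covariant presheaves on 𝔹,
    --     φ↓ sends covariant presheaves on 𝔹 to contravariant presheaves on 𝔸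
    ((∀ μ : A → Q, (∀ x x', μ x' * 𝔸 x x' ≤ μ x) →
        ∀ y y', 𝔹 y y' * (⨅ x, qdivr (φ x y) (μ x)) ≤ ⨅ x, qdivr (φ x y') (μ x)) ∧
      (∀ lam : B → Q, (∀ y y', 𝔹 y y' * lam y ≤ lam y') →
        ∀ x x', (⨅ y, qdivl (lam y) (φ x' y)) * 𝔸 x x' ≤ ⨅ y, qdivl (lam y) (φ x y))) ∧
    -- (2) the Isbell adjunction: P†B(φ↑μ, λ) = PA(μ, φ↓λ)
    (∀ (μ : A → Q) (lam : B → Q),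
        (∀ x x', μ x' * 𝔸 x x' ≤ μ x) → (∀ y y', 𝔹 y y' * lam y ≤ lam y') →
        (⨅ y, qdivl (lam y) (⨅ x, qdivr (φ x y) (μ x))) =
          ⨅ x, qdivr (⨅ y, qdivl (lam y) (φ x y)) (μ x)) :=
  ⟨⟨fun μ _ => isbellUp_covariant hφ1 μ, fun lam _ => isbellDown_contravariant hφ2 lam⟩,
    fun μ lam _ _ => iInf_qdivl_isbellUp_eq_iInf_isbellDown_qdivr φ μ lam⟩

/-- The Isbell adjunction `φ↑ ⊣ φ↓` induced by a `Q`-distributor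
(Proposition `uphi-dphi-adjunction`). -/
theorem qdistributor_isbell_adjunction {A B : Type*}
    (𝔸 : A → A → Q) (𝔹 : B → B → Q)
    (hArefl : ∀ x, (1 : Q) ≤ 𝔸 x x)
    (hAtrans : ∀ x y z, 𝔸 y z * 𝔸 x y ≤ 𝔸 x z)
    (hBrefl : ∀ y, (1 : Q) ≤ 𝔹 y y)
    (hBtrans : ∀ x y z, 𝔹 y z * 𝔹 x y ≤ 𝔹 x z)
    (φ : A → B → Q)
    (hφ1 : ∀ x y y', 𝔹 y y' * φ x y ≤ φ x y')
    (hφ2 : ∀ x x' y, φ x' y * 𝔸 x x' ≤ φ x y) :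
    -- (1) φ↑ sends contravariant presheaves on 𝔸 to covariant presheaves on 𝔹,
    --     φ↓ sends covariant presheaves on 𝔹 to contravariant presheaves on 𝔸
    ((∀ μ : A → Q, (∀ x x', μ x' * 𝔸 x x' ≤ μ x) →
        ∀ y y', 𝔹 y y' * (⨅ x, qdivr (φ x y) (μ x)) ≤ ⨅ x, qdivr (φ x y') (μ x)) ∧
      (∀ lam : B → Q, (∀ y y', 𝔹 y y' * lam y ≤ lam y') →
        ∀ x x', (⨅ y, qdivl (lam y) (φ x' y)) * 𝔸 x x' ≤ ⨅ y, qdivl (lam y) (φ x y))) ∧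
    -- (2) the Isbell adjunction: P†B(φ↑μ, λ) = PA(μ, φ↓λ)
    (∀ (μ : A → Q) (lam : B → Q),
        (∀ x x', μ x' * 𝔸 x x' ≤ μ x) → (∀ y y', 𝔹 y y' * lam y ≤ lam y') →
        (⨅ y, qdivl (lam y) (⨅ x, qdivr (φ x y) (μ x))) =
          ⨅ x, qdivr (⨅ y, qdivl (lam y) (φ x y)) (μ x)) :=
  qdistributor_isbell_adjunction_general 𝔸 𝔹 φ hφ1 hφ2
end
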